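/- arXiv:1109.3592 — 3 statements merged into one kernel-verified Lean document; each statement's English description precedes it below -/
import Mathlib

section
/- Let f : ℝⁿ → ℝ ∪ {±∞} be a proper closed convex function. The mapping Ψ defined on subsets of ℝⁿ × ℝ by Ψ(F*) := ⋂_{(u, f*(u)) ∈ F*} {(x, f(x)) ∈ ℝⁿ × ℝ : u ∈ ∂f(x)} is an inclusion-reversing one-to-one mapping between the collection of K-minimal exposed faces of epi f* and the collection of K-minimal exposed faces of epi f; its inverse is Ψ*(F) := ⋂_{(x, f(x)) ∈ F} {(u, f*(u)) ∈ ℝⁿ × ℝ : u ∈ ∂f(x)}. In particular, for every K-minimal exposed face F* of epi f*, Ψ(F*) is a K-minimal exposed face of epi f and Ψ*(Ψ(F*)) = F*; for every K-minimal exposed face F of epi f, Ψ*(F) is a K-minimal exposed face of epi f* and Ψ(Ψ*(F)) = F; and F₁* ⊆ F₂* implies Ψ(F₂*) ⊆ Ψ(F₁*). -/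
open Matrix Set
open scoped Pointwise

noncomputable section

/-- The epigraph of an extended-real-valued function on ℝⁿ. -/
def epi (n : ℕ) (f : (Fin n → ℝ) → EReal) : Set ((Fin n → ℝ) × ℝ) :=
  {p | f p.1 ≤ (p.2 : EReal)}

/-- The Legendre–Fenchel conjugate f*(u) = sup_x (⟨x,u⟩ − f(x)). -/
def conj (n : ℕ) (f : (Fin n → ℝ) → EReal) (u : Fin n → ℝ) : EReal :=
  ⨆ x : Fin n → ℝ, (((x ⬝ᵥ u : ℝ) : EReal) - f x)

/-- The subdifferential ∂g(x₀) = {u : ∀x, g(x) ≥ g(x₀) + ⟨u, x − x₀⟩}. -/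
def subdiff (n : ℕ) (g : (Fin n → ℝ) → EReal) (x₀ : Fin n → ℝ) : Set (Fin n → ℝ) :=
  {u | ∀ x : Fin n → ℝ, g x₀ + ((u ⬝ᵥ (x - x₀) : ℝ) : EReal) ≤ g x}

/-- The ordering cone K = {0}ⁿ × [0,∞) in ℝⁿ × ℝ. -/
def Kcone (n : ℕ) : Set ((Fin n → ℝ) × ℝ) := {p | p.1 = 0 ∧ 0 ≤ p.2}

/-- y is K-minimal in A : ({y} − (K \ (−K))) ∩ A = ∅. -/
def KMinPt (n : ℕ) (A : Set ((Fin n → ℝ) × ℝ)) (y : (Fin n → ℝ) × ℝ) : Prop :=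
  ({y} - (Kcone n \ (-Kcone n))) ∩ A = ∅

/-- The hyperplane H(u,s,α) = {(x,r) : ⟨x,u⟩ + r·s = α} in ℝⁿ × ℝ. -/
def Hyp (n : ℕ) (u : Fin n → ℝ) (s α : ℝ) : Set ((Fin n → ℝ) × ℝ) :=
  {p | p.1 ⬝ᵥ u + p.2 * s = α}

/-- H(u,s,α) is a supporting hyperplane to A. -/
def IsSuppHyp (n : ℕ) (A : Set ((Fin n → ℝ) × ℝ)) (u : Fin n → ℝ) (s α : ℝ) : Prop :=
  (u, s) ≠ 0 ∧ (Hyp n u s α ∩ A).Nonempty ∧ ∀ p ∈ A, p.1 ⬝ᵥ u + p.2 * s ≤ α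

/-- E is an exposed face of A: E = H ∩ A for some supporting hyperplane H of A. -/
def IsExpFace (n : ℕ) (A E : Set ((Fin n → ℝ) × ℝ)) : Prop :=
  ∃ (u : Fin n → ℝ) (s α : ℝ), IsSuppHyp n A u s α ∧ E = Hyp n u s α ∩ A

/-- E is a K-minimal exposed face of A: an exposed face all of whose points are
K-minimal in A. -/
def IsKMinExpFace (n : ℕ) (A E : Set ((Fin n → ℝ) × ℝ)) : Prop :=
  IsExpFace n A E ∧ ∀ y ∈ E, KMinPt n A y

/-- The duality map Ψ(F*) := ⋂_{(u,f*(u)) ∈ F*} {(x,f(x)) : u ∈ ∂f(x)}. -/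
def Psi (n : ℕ) (f : (Fin n → ℝ) → EReal) (Fs : Set ((Fin n → ℝ) × ℝ)) :
    Set ((Fin n → ℝ) × ℝ) :=
  ⋂ q ∈ {q ∈ Fs | (q.2 : EReal) = conj n f q.1},
    {p | (p.2 : EReal) = f p.1 ∧ q.1 ∈ subdiff n f p.1}

/-- The inverse duality map Ψ*(F) := ⋂_{(x,f(x)) ∈ F} {(u,f*(u)) : u ∈ ∂f(x)}. -/
def PsiStar (n : ℕ) (f : (Fin n → ℝ) → EReal) (F : Set ((Fin n → ℝ) × ℝ)) :
    Set ((Fin n → ℝ) × ℝ) :=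
  ⋂ p ∈ {p ∈ F | (p.2 : EReal) = f p.1},
    {q | (q.2 : EReal) = conj n f q.1 ∧ q.1 ∈ subdiff n f p.1}

/-!
A vertical supporting hyperplane of `epi g` contains, with each point of its face, the vertical
half-line above that point, so the face has points that are not K-minimal. A K-minimal exposed face
is therefore cut out by a hyperplane of some slope `u`, and it is `slopeFace g u`: the points
`(x, g x)` at which `u` is a subgradient.

For `f` proper closed convex, Fenchel–Moreau gives `f** = f`, hence `u ∈ ∂f(x) ↔ x ∈ ∂f*(u)`, and
the face `slopeFace f* x₀` of `epi f*` is the graph of `f*` over `S = ∂f(x₀)`. Fix `u₀` in the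
relative interior of `S`. If `u₀ ∈ ∂f(x)`, then `u ↦ ⟪x - x₀, u⟫` is bounded on `S` by its value at
`u₀` (because `f* = ⟪x₀, ·⟫ - f(x₀)` on `S` and `f* ≥ ⟪x, ·⟫ - f(x)`), so it is constant on `S`,
and `S ⊆ ∂f(x)`. Therefore `Ψ` maps `slopeFace f* x₀` to `slopeFace f u₀`, and `Ψ*` maps it back.
-/

variable {n : ℕ}

lemma mem_epi {g : (Fin n → ℝ) → EReal} {p : (Fin n → ℝ) × ℝ} :
    p ∈ epi n g ↔ g p.1 ≤ (p.2 : EReal) := Iff.rfl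

lemma mem_epi_of_le {g : (Fin n → ℝ) → EReal} {z : (Fin n → ℝ) × ℝ} (hz : z ∈ epi n g) {r : ℝ}
    (hr : z.2 ≤ r) : (z.1, r) ∈ epi n g :=
  hz.trans (EReal.coe_le_coe_iff.2 hr)

lemma nonpos_of_forall_mem_epi_le {g : (Fin n → ℝ) → EReal} {z₀ : (Fin n → ℝ) × ℝ}
    (hz₀ : z₀ ∈ epi n g) {v : Fin n → ℝ} {s α : ℝ}
    (h : ∀ z ∈ epi n g, z.1 ⬝ᵥ v + z.2 * s ≤ α) : s ≤ 0 := by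
  by_contra! hs
  set m := (α - (z₀.1 ⬝ᵥ v + z₀.2 * s) + 1) / s
  have hms : m * s = α - (z₀.1 ⬝ᵥ v + z₀.2 * s) + 1 := div_mul_cancel₀ _ hs.ne'
  have hm : 0 ≤ m := div_nonneg (by linarith [h z₀ hz₀]) hs.le
  have := h _ (mem_epi_of_le hz₀ (le_add_of_nonneg_right hm))
  simp only [add_mul] at this
  linarith

lemma kMinPt_iff {A : Set ((Fin n → ℝ) × ℝ)} {y : (Fin n → ℝ) × ℝ} :
    KMinPt n A y ↔ ∀ t : ℝ, 0 < t → (y.1, y.2 - t) ∉ A := by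
  have hK : Kcone n \ -Kcone n = (fun t : ℝ => ((0 : Fin n → ℝ), t)) '' Ioi 0 := by
    ext ⟨v, t⟩
    simp only [Kcone, mem_sdiff, mem_neg, mem_ofPred_eq, Prod.fst_neg, Prod.snd_neg, neg_eq_zero,
      mem_image, mem_Ioi, Prod.mk.injEq]
    constructor
    · rintro ⟨⟨rfl, ht⟩, h⟩
      exact ⟨t, lt_of_le_of_ne ht fun h0 => h ⟨rfl, h0 ▸ neg_zero.ge⟩, rfl, rfl⟩
    · rintro ⟨t, ht, rfl, rfl⟩
      exact ⟨⟨rfl, ht.le⟩, fun h => by linarith [h.2]⟩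
  simp only [KMinPt, hK, singleton_sub, image_image, eq_empty_iff_forall_notMem, mem_inter_iff,
    mem_image, mem_Ioi]
  constructor
  · intro h t ht hA
    exact h _ ⟨⟨t, ht, by ext <;> simp [sub_eq_add_neg]⟩, hA⟩
  · rintro h _ ⟨⟨t, ht, rfl⟩, hA⟩
    exact h t ht (by convert hA using 1; ext <;> simp [sub_eq_add_neg])

lemma coe_dotProduct_sub_le_conj (g : (Fin n → ℝ) → EReal) (x u : Fin n → ℝ) :
    ((x ⬝ᵥ u : ℝ) : EReal) - g x ≤ conj n g u :=
  le_iSup (fun x' => ((x' ⬝ᵥ u : ℝ) : EReal) - g x') x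

lemma conj_eq_top_of_eq_bot {g : (Fin n → ℝ) → EReal} {x : Fin n → ℝ} (hx : g x = ⊥)
    (u : Fin n → ℝ) : conj n g u = ⊤ :=
  top_le_iff.1 (by simpa [hx] using coe_dotProduct_sub_le_conj g x u)

lemma coe_sub_le_conj_of_mem_epi {g : (Fin n → ℝ) → EReal} {z : (Fin n → ℝ) × ℝ}
    (hz : z ∈ epi n g) (u : Fin n → ℝ) : ((z.1 ⬝ᵥ u - z.2 : ℝ) : EReal) ≤ conj n g u := by
  rw [EReal.coe_sub]
  exact (EReal.sub_le_sub le_rfl hz).trans (coe_dotProduct_sub_le_conj g z.1 u)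

lemma conj_le_coe_iff {g : (Fin n → ℝ) → EReal} {u : Fin n → ℝ} {M : ℝ} :
    conj n g u ≤ (M : EReal) ↔ ∀ z ∈ epi n g, z.1 ⬝ᵥ u - z.2 ≤ M := by
  constructor
  · intro h z hz
    exact_mod_cast (coe_sub_le_conj_of_mem_epi hz u).trans h
  · intro h
    refine iSup_le fun x => ?_
    induction hgx : g x using EReal.rec with
    | bot =>
      have := h (x, x ⬝ᵥ u - M - 1) (by simp [mem_epi, hgx])
      linarith
    | coe r =>
      have := h (x, r) (by simp [mem_epi, hgx])
      exact_mod_cast this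
    | top => simp

lemma mem_subdiff_iff_conj_eq {g : (Fin n → ℝ) → EReal} {x u : Fin n → ℝ} {r : ℝ}
    (hx : g x = r) : u ∈ subdiff n g x ↔ conj n g u = ((x ⬝ᵥ u - r : ℝ) : EReal) := by
  have hdot : ∀ y, u ⬝ᵥ (y - x) = y ⬝ᵥ u - x ⬝ᵥ u := fun y => by
    rw [dotProduct_sub, dotProduct_comm u y, dotProduct_comm u x]
  constructor
  · intro hu
    refine le_antisymm (conj_le_coe_iff.2 fun z hz => ?_) ?_
    · have := (hu z.1).trans hz
      rw [hx, ← EReal.coe_add, EReal.coe_le_coe_iff, hdot] at this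
      linarith
    · simpa [hx] using coe_dotProduct_sub_le_conj g x u
  · intro hu y
    have hy := coe_dotProduct_sub_le_conj g y u
    rw [hu] at hy
    rw [hx, ← EReal.coe_add, hdot]
    induction hgy : g y using EReal.rec with
    | bot => exact absurd (hu.symm.trans (conj_eq_top_of_eq_bot hgy u)) (EReal.coe_ne_top _)
    | coe r' =>
      rw [hgy, ← EReal.coe_sub, EReal.coe_le_coe_iff] at hy
      exact_mod_cast (by linarith)
    | top => exact le_top

lemma mem_subdiff_iff_mem_subdiff_conj {g : (Fin n → ℝ) → EReal} (hg : conj n (conj n g) = g)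
    {x u : Fin n → ℝ} {r s : ℝ} (hx : g x = r) (hu : conj n g u = s) :
    u ∈ subdiff n g x ↔ x ∈ subdiff n (conj n g) u := by
  rw [mem_subdiff_iff_conj_eq hx, mem_subdiff_iff_conj_eq hu, hg, hx, hu, EReal.coe_eq_coe_iff,
    EReal.coe_eq_coe_iff, dotProduct_comm]
  constructor <;> intro h <;> linarith

lemma conj_conj_le (g : (Fin n → ℝ) → EReal) (x : Fin n → ℝ) : conj n (conj n g) x ≤ g x := by
  refine iSup_le fun u => ?_
  have hfy := coe_dotProduct_sub_le_conj g x u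
  induction hgx : g x using EReal.rec with
  | bot => simp [conj_eq_top_of_eq_bot hgx u]
  | coe r =>
    rw [hgx, ← EReal.coe_sub] at hfy
    calc ((u ⬝ᵥ x : ℝ) : EReal) - conj n g u ≤ ((u ⬝ᵥ x - (x ⬝ᵥ u - r) : ℝ) : EReal) := by
          rw [EReal.coe_sub _ (x ⬝ᵥ u - r)]; exact EReal.sub_le_sub le_rfl hfy
      _ = r := by rw [dotProduct_comm]; ring_nf
  | top => exact le_top

lemma convex_subdiff {g : (Fin n → ℝ) → EReal} {x : Fin n → ℝ} {r : ℝ} (hx : g x = r) :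
    Convex ℝ (subdiff n g x) := by
  have : subdiff n g x = ⋂ y, (fun u => r + u ⬝ᵥ (y - x)) ⁻¹' {t : ℝ | (t : EReal) ≤ g y} := by
    ext u; simp [subdiff, hx]
  rw [this]
  refine convex_iInter fun y u hu v hv a b ha hb hab => ?_
  have hS : Convex ℝ {t : ℝ | (t : EReal) ≤ g y} :=
    (ordConnected_Iic.preimage_mono EReal.coe_strictMono.monotone).convex
  have := hS hu hv ha hb hab
  simp only [mem_preimage, add_dotProduct, smul_dotProduct, smul_eq_mul] at this ⊢
  convert this using 1
  linear_combination (-r) * hab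

lemma exists_dotProduct_add_mul_eq (ℓ : ((Fin n → ℝ) × ℝ) →L[ℝ] ℝ) :
    ∃ (v : Fin n → ℝ) (s : ℝ), ∀ p : (Fin n → ℝ) × ℝ, ℓ p = p.1 ⬝ᵥ v + p.2 * s := by
  refine ⟨fun i => ℓ (fun j => if i = j then 1 else 0, 0), ℓ (0, 1), fun p => ?_⟩
  have h1 := LinearMap.pi_apply_eq_sum_univ (ℓ.toLinearMap ∘ₗ LinearMap.inl ℝ _ ℝ) p.1
  have h2 : ℓ (0, p.2) = p.2 * ℓ (0, 1) := by
    simpa using ℓ.map_smul p.2 ((0 : Fin n → ℝ), (1 : ℝ))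
  simp only [LinearMap.coe_comp, ContinuousLinearMap.coe_coe, Function.comp_apply,
    LinearMap.inl_apply, smul_eq_mul] at h1
  conv_lhs => rw [← Prod.fst_add_snd p, map_add]
  rw [h1, h2]
  rfl

lemma exists_separation_of_notMem_epi {f : (Fin n → ℝ) → EReal} (hclosed : IsClosed (epi n f))
    (hconv : Convex ℝ (epi n f)) {p : (Fin n → ℝ) × ℝ} (hp : p ∉ epi n f) :
    ∃ (v : Fin n → ℝ) (s β : ℝ),
      p.1 ⬝ᵥ v + p.2 * s < β ∧ ∀ z ∈ epi n f, β < z.1 ⬝ᵥ v + z.2 * s := by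
  obtain ⟨ℓ, β, hpβ, hβ⟩ := geometric_hahn_banach_point_closed hconv hclosed hp
  obtain ⟨v, s, hℓ⟩ := exists_dotProduct_add_mul_eq ℓ
  exact ⟨v, s, β, hℓ p ▸ hpβ, fun z hz => hℓ z ▸ hβ z hz⟩

lemma conj_le_of_separation {f : (Fin n → ℝ) → EReal} {v : Fin n → ℝ} {s β : ℝ} (hs : 0 < s)
    (hsep : ∀ z ∈ epi n f, β < z.1 ⬝ᵥ v + z.2 * s) :
    conj n f (-s⁻¹ • v) ≤ ((-β / s : ℝ) : EReal) :=
  conj_le_coe_iff.2 fun z hz => by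
    rw [dotProduct_smul, smul_eq_mul, le_div_iff₀ hs]
    have := hsep z hz
    field_simp
    linarith

lemma exists_conj_le {f : (Fin n → ℝ) → EReal} (hclosed : IsClosed (epi n f))
    (hconv : Convex ℝ (epi n f)) {x₁ : Fin n → ℝ} {r₁ : ℝ} (hx₁ : f x₁ = r₁) :
    ∃ (u : Fin n → ℝ) (M : ℝ), conj n f u ≤ (M : EReal) := by
  have hx₁' : (x₁, r₁) ∈ epi n f := hx₁.le
  obtain ⟨v, s, β, hβ, hsep⟩ := exists_separation_of_notMem_epi hclosed hconv (p := (x₁, r₁ - 1))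
    fun h => by rw [mem_epi, hx₁, EReal.coe_le_coe_iff] at h; linarith
  have hs : 0 < s := by
    have := hsep _ hx₁'
    dsimp only at hβ this
    linarith
  exact ⟨_, _, conj_le_of_separation hs hsep⟩

lemma conj_sub_smul_le {f : (Fin n → ℝ) → EReal} {u v : Fin n → ℝ} {M β t : ℝ}
    (hM : conj n f u ≤ (M : EReal)) (hsep : ∀ z ∈ epi n f, β < z.1 ⬝ᵥ v) (ht : 0 ≤ t) :
    conj n f (u - t • v) ≤ ((M - t * β : ℝ) : EReal) :=
  conj_le_coe_iff.2 fun z hz => by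
    have h1 := conj_le_coe_iff.1 hM z hz
    have h2 := mul_le_mul_of_nonneg_left (hsep z hz).le ht
    rw [dotProduct_sub, dotProduct_smul, smul_eq_mul]
    linarith

lemma exists_conj_le_lt {f : (Fin n → ℝ) → EReal} (hclosed : IsClosed (epi n f))
    (hconv : Convex ℝ (epi n f)) {x₁ : Fin n → ℝ} {r₁ : ℝ} (hx₁ : f x₁ = r₁)
    {x : Fin n → ℝ} {c : ℝ} (hxc : (x, c) ∉ epi n f) :
    ∃ (u : Fin n → ℝ) (M : ℝ), conj n f u ≤ (M : EReal) ∧ c < x ⬝ᵥ u - M := by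
  obtain ⟨v, s, β, hxβ, hsep⟩ := exists_separation_of_notMem_epi hclosed hconv hxc
  dsimp only at hxβ
  have hs : 0 ≤ s := by
    have hx₁' : (x₁, r₁) ∈ epi n f := hx₁.le
    have := nonpos_of_forall_mem_epi_le (v := -v) (s := -s) (α := -β) hx₁'
      fun z hz => by rw [dotProduct_neg]; linarith [hsep z hz]
    linarith
  rcases hs.lt_or_eq with hs | rfl
  · refine ⟨_, _, conj_le_of_separation hs hsep, ?_⟩
    rw [dotProduct_smul, smul_eq_mul, show -s⁻¹ * (x ⬝ᵥ v) - -β / s = (β - x ⬝ᵥ v) / s by ring,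
      lt_div_iff₀ hs]
    linarith
  · -- a vertical hyperplane: tilt an affine minorant of `f` by a large multiple of it
    obtain ⟨u₁, M₁, hM₁⟩ := exists_conj_le hclosed hconv hx₁
    simp only [mul_zero, add_zero] at hxβ hsep
    set t := (|c - x ⬝ᵥ u₁ + M₁| + 1) / (β - x ⬝ᵥ v)
    have ht : t * (β - x ⬝ᵥ v) = |c - x ⬝ᵥ u₁ + M₁| + 1 := div_mul_cancel₀ _ (by linarith)
    refine ⟨_, _, conj_sub_smul_le (t := t) hM₁ hsep (by positivity), ?_⟩
    rw [dotProduct_sub, dotProduct_smul, smul_eq_mul]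
    linarith [le_abs_self (c - x ⬝ᵥ u₁ + M₁)]

theorem conj_conj_eq {f : (Fin n → ℝ) → EReal} (hclosed : IsClosed (epi n f))
    (hconv : Convex ℝ (epi n f)) {x₁ : Fin n → ℝ} {r₁ : ℝ} (hx₁ : f x₁ = r₁) :
    conj n (conj n f) = f := by
  funext x
  refine le_antisymm (conj_conj_le f x) (not_lt.1 fun hlt => ?_)
  obtain ⟨c, hc, hcx⟩ := EReal.exists_between_coe_real hlt
  obtain ⟨u, M, hM, hcM⟩ := exists_conj_le_lt hclosed hconv hx₁ (not_le.2 hcx)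
  have := (EReal.sub_le_sub le_rfl hM).trans (coe_dotProduct_sub_le_conj (conj n f) u x)
  rw [← EReal.coe_sub, dotProduct_comm] at this
  exact lt_irrefl _ ((hc.trans (EReal.coe_lt_coe_iff.2 hcM)).trans_le this)

def slopeFace (n : ℕ) (g : (Fin n → ℝ) → EReal) (u : Fin n → ℝ) : Set ((Fin n → ℝ) × ℝ) :=
  {p | (p.2 : EReal) = g p.1 ∧ u ∈ subdiff n g p.1}

lemma mem_slopeFace_iff {g : (Fin n → ℝ) → EReal} {u : Fin n → ℝ} {p : (Fin n → ℝ) × ℝ} :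
    p ∈ slopeFace n g u ↔ p ∈ epi n g ∧ conj n g u = ((p.1 ⬝ᵥ u - p.2 : ℝ) : EReal) := by
  constructor
  · rintro ⟨hp, hu⟩
    exact ⟨hp.ge, (mem_subdiff_iff_conj_eq hp.symm).1 hu⟩
  · rintro ⟨hp, hu⟩
    have hfy := coe_dotProduct_sub_le_conj g p.1 u
    rw [hu] at hfy
    have hgp : g p.1 = p.2 := by
      induction hg : g p.1 using EReal.rec with
      | bot => exact absurd (hu.symm.trans (conj_eq_top_of_eq_bot hg u)) (EReal.coe_ne_top _)
      | coe r =>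
        rw [hg, ← EReal.coe_sub, EReal.coe_le_coe_iff] at hfy
        rw [mem_epi, hg, EReal.coe_le_coe_iff] at hp
        exact_mod_cast (by linarith)
      | top => simp [mem_epi, hg] at hp
    exact ⟨hgp.symm, (mem_subdiff_iff_conj_eq hgp).2 hu⟩

lemma isKMinExpFace_slopeFace {g : (Fin n → ℝ) → EReal} {u : Fin n → ℝ}
    (hne : (slopeFace n g u).Nonempty) : IsKMinExpFace n (epi n g) (slopeFace n g u) := by
  obtain ⟨p₀, hp₀⟩ := hne
  obtain ⟨hp₀epi, hconj⟩ := mem_slopeFace_iff.1 hp₀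
  have hsupp := conj_le_coe_iff.1 hconj.le
  have hface : slopeFace n g u = Hyp n u (-1) (p₀.1 ⬝ᵥ u - p₀.2) ∩ epi n g := by
    ext p
    simp only [mem_slopeFace_iff, hconj, EReal.coe_eq_coe_iff, Hyp, mem_inter_iff, mem_ofPred_eq]
    constructor
    · rintro ⟨h1, h2⟩
      exact ⟨by linarith, h1⟩
    · rintro ⟨h1, h2⟩
      exact ⟨h2, by linarith⟩
  refine ⟨⟨u, -1, _, ⟨by simp, hface ▸ ⟨p₀, hp₀⟩, fun p hp => ?_⟩, hface⟩, fun p hp => ?_⟩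
  · linarith [hsupp p hp]
  · refine kMinPt_iff.2 fun t ht hpt => ?_
    have h1 := hsupp _ hpt
    have h2 := (mem_slopeFace_iff.1 hp).2
    rw [hconj, EReal.coe_eq_coe_iff] at h2
    dsimp only at h1
    linarith

lemma exists_slopeFace_of_isKMinExpFace {g : (Fin n → ℝ) → EReal} {E : Set ((Fin n → ℝ) × ℝ)}
    (hE : IsKMinExpFace n (epi n g) E) : ∃ u, E.Nonempty ∧ E = slopeFace n g u := by
  obtain ⟨⟨w, s, α, ⟨-, ⟨p₀, hp₀H, hp₀⟩, hsupp⟩, rfl⟩, hmin⟩ := hE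
  have hs : s < 0 := by
    refine (nonpos_of_forall_mem_epi_le hp₀ hsupp).lt_of_ne fun hs => ?_
    have hp₁ : (p₀.1, p₀.2 + 1) ∈ Hyp n w s α ∩ epi n g :=
      ⟨by simpa [Hyp, hs] using hp₀H, mem_epi_of_le hp₀ (by linarith)⟩
    exact kMinPt_iff.1 (hmin _ hp₁) 1 one_pos (by simpa using hp₀)
  set u := (-s)⁻¹ • w
  have hnorm : ∀ p : (Fin n → ℝ) × ℝ, p.1 ⬝ᵥ u - p.2 = (p.1 ⬝ᵥ w + p.2 * s) / -s := fun p => by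
    rw [dotProduct_smul, smul_eq_mul]
    field_simp [hs.ne]
    ring
  have hconj : conj n g u = ((α / -s : ℝ) : EReal) := by
    refine le_antisymm (conj_le_coe_iff.2 fun z hz => ?_) ?_
    · rw [hnorm]
      exact div_le_div_of_nonneg_right (hsupp z hz) (by linarith)
    · have := coe_sub_le_conj_of_mem_epi hp₀ u
      rwa [hnorm, show p₀.1 ⬝ᵥ w + p₀.2 * s = α from hp₀H] at this
  refine ⟨u, ⟨p₀, hp₀H, hp₀⟩, ?_⟩
  ext p
  rw [mem_slopeFace_iff, hconj, EReal.coe_eq_coe_iff, hnorm, div_left_inj' (by linarith)]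
  exact ⟨fun ⟨hH, hp⟩ => ⟨hp, hH.symm⟩, fun ⟨hp, hH⟩ => ⟨hH.symm, hp⟩⟩

lemma isKMinExpFace_epi_iff {g : (Fin n → ℝ) → EReal} {E : Set ((Fin n → ℝ) × ℝ)} :
    IsKMinExpFace n (epi n g) E ↔ ∃ u, E.Nonempty ∧ E = slopeFace n g u := by
  refine ⟨exists_slopeFace_of_isKMinExpFace, ?_⟩
  rintro ⟨u, hne, rfl⟩
  exact isKMinExpFace_slopeFace hne

section IntrinsicInterior

open Topology

variable {E : Type*} [NormedAddCommGroup E] [NormedSpace ℝ E]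

lemma exists_lineMap_mem_of_mem_intrinsicInterior {S : Set E} {u₀ u : E}
    (hu₀ : u₀ ∈ intrinsicInterior ℝ S) (hu : u ∈ S) :
    ∃ ε : ℝ, 0 < ε ∧ AffineMap.lineMap u u₀ (1 + ε) ∈ S := by
  obtain ⟨y, hy, rfl⟩ := hu₀
  let φ : ℝ → affineSpan ℝ S := fun ε =>
    ⟨AffineMap.lineMap u y (1 + ε), AffineMap.lineMap_mem _ (subset_affineSpan ℝ S hu) y.2⟩
  have hφ : Continuous φ := by
    refine Continuous.subtype_mk ?_ _
    simp only [AffineMap.lineMap_apply_module']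
    fun_prop
  have hφ0 : φ 0 = y := Subtype.ext (by simp [φ])
  have hev : ∀ᶠ ε in 𝓝[>] (0 : ℝ), φ ε ∈ ((↑) : affineSpan ℝ S → E) ⁻¹' S :=
    nhdsWithin_le_nhds (hφ.continuousAt.preimage_mem_nhds (hφ0 ▸ mem_interior_iff_mem_nhds.1 hy))
  obtain ⟨ε, hεS, hε⟩ := (hev.and self_mem_nhdsWithin).exists
  exact ⟨ε, hε, hεS⟩

lemma apply_eq_of_forall_le_of_mem_intrinsicInterior {S : Set E} (ℓ : E →ₗ[ℝ] ℝ) {c : ℝ}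
    (hS : ∀ u ∈ S, ℓ u ≤ c) {u₀ u : E} (hu₀ : u₀ ∈ intrinsicInterior ℝ S) (hc : ℓ u₀ = c)
    (hu : u ∈ S) : ℓ u = c := by
  obtain ⟨ε, hε, hw⟩ := exists_lineMap_mem_of_mem_intrinsicInterior hu₀ hu
  have := hS _ hw
  rw [AffineMap.lineMap_apply_module', map_add, map_smul, map_sub, hc, smul_eq_mul] at this
  nlinarith [hS u hu]

end IntrinsicInterior

lemma subdiff_subset_of_mem_intrinsicInterior {g : (Fin n → ℝ) → EReal} {x₀ x : Fin n → ℝ}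
    {r₀ r : ℝ} (hx₀ : g x₀ = r₀) (hx : g x = r) {u₀ : Fin n → ℝ}
    (hu₀ : u₀ ∈ intrinsicInterior ℝ (subdiff n g x₀)) (hu₀x : u₀ ∈ subdiff n g x) :
    subdiff n g x₀ ⊆ subdiff n g x := by
  intro u hu
  set ℓ := dotProductBilin ℝ ℝ (x - x₀)
  have hℓ : ∀ v, ℓ v = x ⬝ᵥ v - x₀ ⬝ᵥ v := fun v => by
    rw [dotProductBilin_apply_apply, sub_dotProduct]
  have hconj : ∀ v ∈ subdiff n g x₀, conj n g v = ((x₀ ⬝ᵥ v - r₀ : ℝ) : EReal) :=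
    fun v hv => (mem_subdiff_iff_conj_eq hx₀).1 hv
  have hle : ∀ v ∈ subdiff n g x₀, ℓ v ≤ r - r₀ := fun v hv => by
    have := (hx ▸ coe_dotProduct_sub_le_conj g x v).trans_eq (hconj v hv)
    rw [← EReal.coe_sub, EReal.coe_le_coe_iff] at this
    linarith [hℓ v]
  have hℓu₀ : ℓ u₀ = r - r₀ := by
    have := (hconj u₀ (intrinsicInterior_subset hu₀)).symm.trans
      ((mem_subdiff_iff_conj_eq hx).1 hu₀x)
    rw [EReal.coe_eq_coe_iff] at this
    linarith [hℓ u₀]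
  have hℓu := apply_eq_of_forall_le_of_mem_intrinsicInterior ℓ hle hu₀ hℓu₀ hu
  rw [mem_subdiff_iff_conj_eq hx, hconj u hu, EReal.coe_eq_coe_iff]
  linarith [hℓ u]

section Duality

variable {f : (Fin n → ℝ) → EReal}

lemma slopeFace_conj_eq (hf : conj n (conj n f) = f) {x₀ : Fin n → ℝ} {r₀ : ℝ}
    (hx₀ : f x₀ = r₀) :
    slopeFace n (conj n f) x₀ = {q | (q.2 : EReal) = conj n f q.1 ∧ q.1 ∈ subdiff n f x₀} := by
  ext q
  refine and_congr_right fun hq => ?_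
  rw [mem_subdiff_iff_mem_subdiff_conj hf hx₀ hq.symm]

lemma psi_eq_slopeFace {x₀ : Fin n → ℝ} {r₀ : ℝ} (hx₀ : f x₀ = r₀) {u₀ : Fin n → ℝ}
    (hu₀ : u₀ ∈ intrinsicInterior ℝ (subdiff n f x₀)) :
    Psi n f {q | (q.2 : EReal) = conj n f q.1 ∧ q.1 ∈ subdiff n f x₀} = slopeFace n f u₀ := by
  have hu₀S := intrinsicInterior_subset hu₀
  have hconj := (mem_subdiff_iff_conj_eq hx₀).1 hu₀S
  ext p
  simp only [Psi, mem_iInter, mem_ofPred_eq]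
  constructor
  · intro hp
    exact hp (u₀, _) ⟨⟨hconj.symm, hu₀S⟩, hconj.symm⟩
  · rintro ⟨hp, hu₀p⟩ q ⟨⟨-, hq⟩, -⟩
    exact ⟨hp, subdiff_subset_of_mem_intrinsicInterior hx₀ hp.symm hu₀ hu₀p hq⟩

lemma psiStar_slopeFace {x₀ : Fin n → ℝ} {r₀ : ℝ} (hx₀ : f x₀ = r₀) {u₀ : Fin n → ℝ}
    (hu₀ : u₀ ∈ intrinsicInterior ℝ (subdiff n f x₀)) :
    PsiStar n f (slopeFace n f u₀) =
      {q | (q.2 : EReal) = conj n f q.1 ∧ q.1 ∈ subdiff n f x₀} := by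
  ext q
  simp only [PsiStar, mem_iInter, mem_ofPred_eq]
  constructor
  · intro hq
    exact hq (x₀, r₀) ⟨⟨hx₀.symm, intrinsicInterior_subset hu₀⟩, hx₀.symm⟩
  · rintro ⟨hq, hqS⟩ p ⟨⟨hp, hu₀p⟩, -⟩
    exact ⟨hq, subdiff_subset_of_mem_intrinsicInterior hx₀ hp.symm hu₀ hu₀p hqS⟩

theorem isKMinExpFace_psi (hf : conj n (conj n f) = f) {Fs : Set ((Fin n → ℝ) × ℝ)}
    (hFs : IsKMinExpFace n (epi n (conj n f)) Fs) :
    IsKMinExpFace n (epi n f) (Psi n f Fs) ∧ PsiStar n f (Psi n f Fs) = Fs := by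
  obtain ⟨x₀, hne, rfl⟩ := isKMinExpFace_epi_iff.1 hFs
  obtain ⟨⟨u, s⟩, hs, hx₀u⟩ := hne
  have hx₀ : f x₀ = ((u ⬝ᵥ x₀ - s : ℝ) : EReal) := by
    rw [← hf]
    exact (mem_subdiff_iff_conj_eq hs.symm).1 hx₀u
  obtain ⟨u₀, hu₀⟩ := Set.Nonempty.intrinsicInterior (convex_subdiff hx₀)
    ⟨u, (mem_subdiff_iff_mem_subdiff_conj hf hx₀ hs.symm).2 hx₀u⟩
  rw [slopeFace_conj_eq hf hx₀, psi_eq_slopeFace hx₀ hu₀, psiStar_slopeFace hx₀ hu₀]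
  exact ⟨isKMinExpFace_slopeFace ⟨(x₀, _), hx₀.symm, intrinsicInterior_subset hu₀⟩, rfl⟩

lemma psi_conj (hf : conj n (conj n f) = f) : Psi n (conj n f) = PsiStar n f := by
  ext F q
  simp only [Psi, PsiStar, hf, mem_iInter, mem_ofPred_eq]
  refine forall_congr' fun p => imp_congr_right fun ⟨_, hp⟩ => and_congr_right fun hq => ?_
  rw [mem_subdiff_iff_mem_subdiff_conj hf hp.symm hq.symm]

lemma psiStar_conj (hf : conj n (conj n f) = f) : PsiStar n (conj n f) = Psi n f := by
  ext F p
  simp only [Psi, PsiStar, hf, mem_iInter, mem_ofPred_eq]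
  refine forall_congr' fun q => imp_congr_right fun ⟨_, hq⟩ => and_congr_right fun hp => ?_
  rw [mem_subdiff_iff_mem_subdiff_conj hf hp.symm hq.symm]

lemma psi_antitone : Antitone (Psi n f) := fun _ _ h =>
  biInter_subset_biInter_left fun _ hq => ⟨h hq.1, hq.2⟩

end Duality

/-- Ψ is an inclusion-reversing one-to-one mapping between the
K-minimal exposed faces of epi f* and those of epi f, with inverse Ψ*. -/
theorem stmt5 (n : ℕ) (f : (Fin n → ℝ) → EReal)
    (hdom : ∃ x, f x ≠ ⊤) (hbot : ∀ x, f x ≠ ⊥)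
    (hclosed : IsClosed (epi n f)) (hconv : Convex ℝ (epi n f)) :
    (∀ Fs : Set ((Fin n → ℝ) × ℝ), IsKMinExpFace n (epi n (conj n f)) Fs →
        IsKMinExpFace n (epi n f) (Psi n f Fs) ∧ PsiStar n f (Psi n f Fs) = Fs) ∧
    (∀ F : Set ((Fin n → ℝ) × ℝ), IsKMinExpFace n (epi n f) F →
        IsKMinExpFace n (epi n (conj n f)) (PsiStar n f F) ∧ Psi n f (PsiStar n f F) = F) ∧
    (∀ Fs₁ Fs₂ : Set ((Fin n → ℝ) × ℝ), IsKMinExpFace n (epi n (conj n f)) Fs₁ →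
        IsKMinExpFace n (epi n (conj n f)) Fs₂ → Fs₁ ⊆ Fs₂ →
        Psi n f Fs₂ ⊆ Psi n f Fs₁) := by
  obtain ⟨x₁, hx₁⟩ := hdom
  have hf : conj n (conj n f) = f :=
    conj_conj_eq hclosed hconv (EReal.coe_toReal hx₁ (hbot x₁)).symm
  refine ⟨fun Fs => isKMinExpFace_psi hf, fun F hF => ?_, fun _ _ _ _ h => psi_antitone h⟩
  -- the second assertion is the first one for `f*`, whose conjugate is `f`
  have := isKMinExpFace_psi (congrArg (conj n) hf) (hf.symm ▸ hF)
  rwa [psi_conj hf, psiStar_conj hf] at this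
end
end

section
/- Let f be a proper closed polyhedral convex function on ℝⁿ, let F be a K-minimal exposed face of epi f, and let Ψ*(F) := ⋂_{(x,f(x)) ∈ F} {(u,f*(u)) : u ∈ ∂f(x)}. If (x̄, f(x̄)) lies in the relative interior of F and (ū, f*(ū)) lies in the relative interior of Ψ*(F), then the set S* := {w ∈ ℝⁿ : ∃ t̄ > 0 such that for all t ∈ (0, t̄), x̄ ∈ ∂f*(ū + t w)} is a linear subspace of ℝⁿ with dim S* = dim Ψ*(F). -/
/-!
By K-minimality, F lies on the graph of f. A subgradient u of f at x̄ makes the linear functional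
(x, r) ↦ ⟨u, x⟩ - r attain its maximum over epi f at (x̄, f(x̄)); since that point is in the
relative interior of F, the functional is constant on F, so u is a subgradient at every point of
F. Hence Ψ*(F) is the graph of the affine function u ↦ ⟨x̄, u⟩ - f(x̄) over
∂f(x̄) = {u | x̄ ∈ ∂f*(u)}, an injective affine image of ∂f(x̄). So dim Ψ*(F) = dim ∂f(x̄), and S*
is the set of feasible directions of ∂f(x̄) at ū, which at a relative interior point is the
direction of the affine hull.
-/

open Matrix Set
open scoped Pointwise

noncomputable section

/-- A is a polyhedral subset of ℝⁿ × ℝ (finite intersection of half-spaces). -/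
def IsPolyhedral (n : ℕ) (A : Set ((Fin n → ℝ) × ℝ)) : Prop :=
  ∃ (N : ℕ) (u : Fin N → Fin n → ℝ) (s β : Fin N → ℝ),
    A = {p | ∀ i, p.1 ⬝ᵥ u i + p.2 * s i ≤ β i}

/-- The dimension of a convex subset of ℝⁿ × ℝ: the dimension of its affine hull. -/
def dimSet (n : ℕ) (F : Set ((Fin n → ℝ) × ℝ)) : ℕ :=
  Module.finrank ℝ (affineSpan ℝ F).direction

open Filter Topology

theorem EReal.coe_sub_le_coe_iff {a b : ℝ} {e : EReal} :
    (a : EReal) - e ≤ b ↔ ((a - b : ℝ) : EReal) ≤ e := by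
  induction e with
  | bot => simp [-EReal.coe_sub]
  | coe e =>
    norm_cast
    constructor <;> intro h <;> linarith
  | top => simp

theorem EReal.add_coe_le_coe_iff {a b : ℝ} {e : EReal} :
    e + a ≤ b ↔ e ≤ ((b - a : ℝ) : EReal) := by
  rw [EReal.coe_sub, EReal.le_sub_iff_add_le (.inl (EReal.coe_ne_bot a))
    (.inl (EReal.coe_ne_top a))]

section Conjugate

variable {n : ℕ} {f : (Fin n → ℝ) → EReal} {x u : Fin n → ℝ} {s : ℝ}

theorem coe_le_conj (hx : (s : EReal) = f x) (u : Fin n → ℝ) :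
    ((x ⬝ᵥ u - s : ℝ) : EReal) ≤ conj n f u := by
  rw [EReal.coe_sub, hx]
  exact le_iSup (fun y => ((y ⬝ᵥ u : ℝ) : EReal) - f y) x

theorem mem_subdiff_iff_conj_le (hx : (s : EReal) = f x) :
    u ∈ subdiff n f x ↔ conj n f u ≤ ((x ⬝ᵥ u - s : ℝ) : EReal) := by
  simp only [subdiff, conj, iSup_le_iff, EReal.coe_sub_le_coe_iff, ← hx,
    ← EReal.coe_add]
  refine forall_congr' fun y => ?_
  rw [dotProduct_sub, dotProduct_comm u y, dotProduct_comm u x]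
  ring_nf

theorem conj_eq_of_mem_subdiff (hx : (s : EReal) = f x) (hu : u ∈ subdiff n f x) :
    conj n f u = ((x ⬝ᵥ u - s : ℝ) : EReal) :=
  le_antisymm ((mem_subdiff_iff_conj_le hx).1 hu) (coe_le_conj hx u)

theorem mem_subdiff_conj_iff {u₀ : Fin n → ℝ} (hx : (s : EReal) = f x)
    (hu₀ : u₀ ∈ subdiff n f x) :
    x ∈ subdiff n (conj n f) u ↔ u ∈ subdiff n f x := by
  rw [mem_subdiff_iff_conj_le hx]
  constructor
  · intro h
    -- f*(u₀) is finite, so the subgradient inequality at u₀ bounds f*(u) from above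
    have h₀ := h u₀
    rw [conj_eq_of_mem_subdiff hx hu₀, EReal.add_coe_le_coe_iff] at h₀
    refine h₀.trans_eq ?_
    rw [dotProduct_sub]
    ring_nf
  · intro h v
    rw [le_antisymm h (coe_le_conj hx u), ← EReal.coe_add, dotProduct_sub]
    exact (coe_le_conj hx v).trans_eq' (by ring_nf)

theorem dotProduct_sub_le_of_mem_subdiff (hx : (s : EReal) = f x) (hu : u ∈ subdiff n f x)
    {q : (Fin n → ℝ) × ℝ} (hq : q ∈ epi n f) :
    u ⬝ᵥ q.1 - q.2 ≤ u ⬝ᵥ x - s := by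
  have h := (hu q.1).trans hq
  rw [← hx, ← EReal.coe_add, EReal.coe_le_coe_iff, dotProduct_sub] at h
  linarith

end Conjugate

section IntrinsicInterior

variable {E E' : Type*} [NormedAddCommGroup E] [NormedSpace ℝ E] [AddCommGroup E']
  [Module ℝ E'] {A : Set E} {y : E}

theorem eventually_add_smul_mem_of_mem_intrinsicInterior (hy : y ∈ intrinsicInterior ℝ A)
    {v : E} (hv : v ∈ (affineSpan ℝ A).direction) : ∀ᶠ t in 𝓝 (0 : ℝ), y + t • v ∈ A := by
  obtain ⟨z, hz, rfl⟩ := hy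
  let c : ℝ → affineSpan ℝ A := fun t =>
    ⟨t • v +ᵥ (z : E), AffineSubspace.vadd_mem_of_mem_direction (Submodule.smul_mem _ t hv) z.2⟩
  have hc : Continuous c := by fun_prop
  have hc₀ : c 0 = z := by ext; simp [c]
  filter_upwards [hc.continuousAt.preimage_mem_nhds (isOpen_interior.mem_nhds (hc₀ ▸ hz))]
    with t ht
  simpa [c, add_comm] using interior_subset ht

theorem LinearMap.eq_of_isMaxOn_of_mem_intrinsicInterior (ℓ : E →ₗ[ℝ] ℝ)
    (hy : y ∈ intrinsicInterior ℝ A) (hmax : IsMaxOn ℓ A y) {z : E} (hz : z ∈ A) :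
    ℓ z = ℓ y := by
  have hv : y - z ∈ (affineSpan ℝ A).direction :=
    AffineSubspace.vsub_mem_direction (mem_affineSpan ℝ (intrinsicInterior_subset hy))
      (mem_affineSpan ℝ hz)
  obtain ⟨t, htA, ht⟩ := ((eventually_add_smul_mem_of_mem_intrinsicInterior hy hv).filter_mono
    nhdsWithin_le_nhds).and self_mem_nhdsWithin |>.exists (f := 𝓝[>] (0 : ℝ))
  have hle : ℓ (y + t • (y - z)) ≤ ℓ y := hmax htA
  rw [map_add, map_smul, map_sub, smul_eq_mul] at hle
  refine le_antisymm (hmax hz) ?_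
  nlinarith [show (0 : ℝ) < t from ht]

theorem exists_Ioo_add_smul_mem_image_iff (π : E →ₗ[ℝ] E') (hy : y ∈ intrinsicInterior ℝ A)
    (w : E') :
    (∃ tb > (0 : ℝ), ∀ t ∈ Ioo (0 : ℝ) tb, π y + t • w ∈ π '' A) ↔
      w ∈ (affineSpan ℝ (π '' A)).direction := by
  constructor
  · rintro ⟨tb, htb, hmem⟩
    have h := AffineSubspace.vsub_mem_direction
      (mem_affineSpan ℝ (hmem (tb / 2) ⟨by positivity, by linarith⟩))
      (mem_affineSpan ℝ (mem_image_of_mem π (intrinsicInterior_subset hy)))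
    rw [vsub_eq_sub, add_sub_cancel_left] at h
    exact (Submodule.smul_mem_iff _ (by positivity)).1 h
  · intro hw
    rw [← π.coe_toAffineMap, ← AffineSubspace.map_span, AffineSubspace.map_direction] at hw
    obtain ⟨v, hv, rfl⟩ := hw
    obtain ⟨tb, htb, hsub⟩ := mem_nhdsGT_iff_exists_Ioo_subset.1
      ((eventually_add_smul_mem_of_mem_intrinsicInterior hy hv).filter_mono nhdsWithin_le_nhds)
    exact ⟨tb, htb, fun t ht => ⟨_, hsub ht, by simp⟩⟩

end IntrinsicInterior

theorem finrank_direction_affineSpan_image {k V₁ V₂ P₁ P₂ : Type*} [Ring k]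
    [AddCommGroup V₁] [Module k V₁] [AddTorsor V₁ P₁] [AddCommGroup V₂] [Module k V₂]
    [AddTorsor V₂ P₂] (Φ : P₁ →ᵃ[k] P₂) (hΦ : Function.Injective Φ) (s : Set P₁) :
    Module.finrank k (affineSpan k (Φ '' s)).direction =
      Module.finrank k (affineSpan k s).direction := by
  rw [← AffineSubspace.map_span, AffineSubspace.map_direction]
  exact (Submodule.equivMapOfInjective _ (Φ.linear_injective_iff.2 hΦ) _).finrank_eq.symm

section Faces

variable {n : ℕ} {f : (Fin n → ℝ) → EReal} {F : Set ((Fin n → ℝ) × ℝ)}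
  {x u : Fin n → ℝ} {s : ℝ}

theorem IsExpFace.subset {A : Set ((Fin n → ℝ) × ℝ)} (hF : IsExpFace n A F) : F ⊆ A := by
  obtain ⟨_, _, _, -, rfl⟩ := hF
  exact inter_subset_right

theorem KMinPt.coe_snd_eq {p : (Fin n → ℝ) × ℝ} (hmin : KMinPt n (epi n f) p)
    (hp : p ∈ epi n f) : (p.2 : EReal) = f p.1 := by
  refine le_antisymm ?_ hp
  by_contra! hlt
  obtain ⟨a, hfa, hap⟩ := EReal.lt_iff_exists_real_btwn.1 hlt
  rw [EReal.coe_lt_coe_iff] at hap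
  have hbelow : (p.1, a) ∈ ({p} - (Kcone n \ -Kcone n)) ∩ epi n f := by
    refine ⟨mem_sub.2 ⟨p, rfl, (0, p.2 - a), ⟨⟨rfl, by linarith⟩, fun hneg => ?_⟩,
      Prod.ext (sub_zero _) (sub_sub_cancel _ _)⟩,
      hfa.le⟩
    have : (0 : ℝ) ≤ -(p.2 - a) := hneg.2
    linarith
  rw [hmin] at hbelow
  exact hbelow

theorem IsKMinExpFace.coe_snd_eq (hF : IsKMinExpFace n (epi n f) F) {p : (Fin n → ℝ) × ℝ}
    (hp : p ∈ F) : (p.2 : EReal) = f p.1 :=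
  (hF.2 p hp).coe_snd_eq (hF.1.subset hp)

theorem mem_subdiff_of_mem_intrinsicInterior (hFepi : F ⊆ epi n f)
    (hFgraph : ∀ p ∈ F, (p.2 : EReal) = f p.1) (hxs : (x, s) ∈ intrinsicInterior ℝ F)
    (hu : u ∈ subdiff n f x) {p : (Fin n → ℝ) × ℝ} (hp : p ∈ F) : u ∈ subdiff n f p.1 := by
  have hs := hFgraph _ (intrinsicInterior_subset hxs)
  let ℓ : (Fin n → ℝ) × ℝ →ₗ[ℝ] ℝ :=
    dotProductBilin ℝ ℝ u ∘ₗ LinearMap.fst ℝ _ ℝ - LinearMap.snd ℝ _ ℝ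
  have hℓ : ∀ q, ℓ q = u ⬝ᵥ q.1 - q.2 := fun q => rfl
  have hmax : IsMaxOn ℓ F (x, s) := fun q hq => by
    simpa only [mem_ofPred_eq, hℓ] using dotProduct_sub_le_of_mem_subdiff hs hu (hFepi hq)
  have heq := ℓ.eq_of_isMaxOn_of_mem_intrinsicInterior hxs hmax hp
  rw [hℓ, hℓ] at heq
  rw [mem_subdiff_iff_conj_le (hFgraph p hp), conj_eq_of_mem_subdiff hs hu, dotProduct_comm p.1,
    dotProduct_comm x, heq]

def affineGraph (x : Fin n → ℝ) (s : ℝ) : (Fin n → ℝ) →ᵃ[ℝ] (Fin n → ℝ) × ℝ :=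
  (AffineMap.id ℝ _).prod ((dotProductBilin ℝ ℝ x).toAffineMap - AffineMap.const ℝ _ s)

@[simp]
theorem affineGraph_apply : affineGraph x s u = (u, x ⬝ᵥ u - s) := rfl

theorem affineGraph_injective : Function.Injective (affineGraph x s) :=
  fun _ _ h => congrArg Prod.fst h

theorem psiStar_eq_image (hFepi : F ⊆ epi n f) (hFgraph : ∀ p ∈ F, (p.2 : EReal) = f p.1)
    (hxs : (x, s) ∈ intrinsicInterior ℝ F) :
    PsiStar n f F = affineGraph x s '' subdiff n f x := by
  have hxsF := intrinsicInterior_subset hxs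
  have hs := hFgraph _ hxsF
  have hidx : {p ∈ F | (p.2 : EReal) = f p.1} = F := sep_eq_self_iff_mem_true.2 hFgraph
  ext q
  simp only [PsiStar, hidx, mem_iInter₂, mem_ofPred_eq, mem_image, affineGraph_apply]
  constructor
  · intro h
    obtain ⟨hq₂, hq₁⟩ := h _ hxsF
    rw [conj_eq_of_mem_subdiff hs hq₁, EReal.coe_eq_coe_iff] at hq₂
    exact ⟨q.1, hq₁, Prod.ext rfl hq₂.symm⟩
  · rintro ⟨u, hu, rfl⟩ p hp
    exact ⟨(conj_eq_of_mem_subdiff hs hu).symm,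
      mem_subdiff_of_mem_intrinsicInterior hFepi hFgraph hxs hu hp⟩

end Faces

theorem stmt9_general (n : ℕ) (f : (Fin n → ℝ) → EReal)
    (F : Set ((Fin n → ℝ) × ℝ))
    (hF : IsKMinExpFace n (epi n f) F)
    (xb : Fin n → ℝ) (sb : ℝ)
    (hxb : (xb, sb) ∈ intrinsicInterior ℝ F)
    (ub : Fin n → ℝ) (rb : ℝ)
    (hub : (ub, rb) ∈ intrinsicInterior ℝ (PsiStar n f F)) :
    ∃ W : Submodule ℝ (Fin n → ℝ),
      (W : Set (Fin n → ℝ)) =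
        {w : Fin n → ℝ | ∃ tb > (0 : ℝ), ∀ t ∈ Set.Ioo (0 : ℝ) tb,
          xb ∈ subdiff n (conj n f) (ub + t • w)} ∧
      Module.finrank ℝ W = dimSet n (PsiStar n f F) := by
  have hFgraph : ∀ p ∈ F, (p.2 : EReal) = f p.1 := fun _ => hF.coe_snd_eq
  have hsb := hFgraph _ (intrinsicInterior_subset hxb)
  have hP := psiStar_eq_image hF.1.subset hFgraph hxb
  have hC : LinearMap.fst ℝ _ ℝ '' PsiStar n f F = subdiff n f xb := by
    rw [hP, image_image]
    simp
  have hub' : ub ∈ subdiff n f xb := hC ▸ mem_image_of_mem _ (intrinsicInterior_subset hub)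
  refine ⟨(affineSpan ℝ (subdiff n f xb)).direction, ?_, ?_⟩
  · ext w
    have hdir := exists_Ioo_add_smul_mem_image_iff (LinearMap.fst ℝ _ ℝ) hub w
    rw [hC, LinearMap.fst_apply] at hdir
    simp only [SetLike.mem_coe, mem_ofPred_eq, ← hdir, mem_subdiff_conj_iff hsb hub']
  · rw [dimSet, hP, finrank_direction_affineSpan_image _ affineGraph_injective]

/-- for a proper closed polyhedral convex f, a K-minimal exposed
face F of epi f with (x̄,f(x̄)) ∈ ri F and (ū,f*(ū)) ∈ ri Ψ*(F), the set
S* = {w : ∃ t̄ > 0, ∀ t ∈ (0,t̄), x̄ ∈ ∂f*(ū+tw)} is a linear subspace with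
dim S* = dim Ψ*(F). -/
theorem stmt9 (n : ℕ) (f : (Fin n → ℝ) → EReal)
    (hdom : ∃ x, f x ≠ ⊤) (hbot : ∀ x, f x ≠ ⊥)
    (hpoly : IsPolyhedral n (epi n f))
    (F : Set ((Fin n → ℝ) × ℝ))
    (hF : IsKMinExpFace n (epi n f) F)
    (xb : Fin n → ℝ) (sb : ℝ) (hsb : (sb : EReal) = f xb)
    (hxb : (xb, sb) ∈ intrinsicInterior ℝ F)
    (ub : Fin n → ℝ) (rb : ℝ) (hrb : (rb : EReal) = conj n f ub)
    (hub : (ub, rb) ∈ intrinsicInterior ℝ (PsiStar n f F)) :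
    ∃ W : Submodule ℝ (Fin n → ℝ),
      (W : Set (Fin n → ℝ)) =
        {w : Fin n → ℝ | ∃ tb > (0 : ℝ), ∀ t ∈ Set.Ioo (0 : ℝ) tb,
          xb ∈ subdiff n (conj n f) (ub + t • w)} ∧
      Module.finrank ℝ W = dimSet n (PsiStar n f F) :=
  stmt9_general n f F hF xb sb hxb ub rb hub
end
end

section
/- Let f be a proper closed polyhedral convex function on ℝⁿ. Then for every K-minimal exposed face F* of epi f*, with Ψ(F*) := ⋂_{(u,f*(u)) ∈ F*} {(x,f(x)) : u ∈ ∂f(x)}, the dimensions are complementary: dim F* + dim Ψ(F*) = n. -/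
/-!
Normalising the supporting hyperplane of `F*` (K-minimality rules out a vertical one) exhibits
`F*` as the graph, over `D = {v | f* v = ⟪v, u⟫ - α}`, of an affine function, and `Ψ(F*)` as the
graph of `f` over `E = {x | D ⊆ ∂f x}`. Since a polyhedral `f` equals `f**`, `f u = α`, so `u ∈ E`.
On `E`, `f` agrees with each `x ↦ ⟪x, v⟫ - f* v` (`v ∈ D`), which makes the directions of `D` and
`E` orthogonal. Conversely, if `⟪v, w⟫ = m` for all `v ∈ D`, every inequality of `epi f` active
at `(u, α)` stays active along `(w, m)`, because its normal yields a point of `D`.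
So `u + ε • w ∈ E` for small `ε > 0`, and the two directions are orthogonal complements in `ℝⁿ`.
-/

open Matrix Set
open scoped Pointwise

noncomputable section

lemma nonpos_of_forall_ge {c t b r₀ : ℝ} (h : ∀ r, r₀ ≤ r → c + r * t ≤ b) : t ≤ 0 := by
  by_contra! ht
  have hr := h (max r₀ ((b - c + 1) / t)) (le_max_left _ _)
  have hmul := mul_le_mul_of_nonneg_right (le_max_right r₀ ((b - c + 1) / t)) ht.le
  rw [div_mul_cancel₀ _ ht.ne'] at hmul
  linarith

lemma exists_pos_forall_add_mul_le {ι : Type*} [Finite ι] {c δ β : ι → ℝ}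
    (hc : ∀ i, c i ≤ β i) (hδ : ∀ i, c i = β i → δ i ≤ 0) :
    ∃ ε > 0, ∀ i, c i + ε * δ i ≤ β i := by
  have hev : ∀ᶠ ε in nhdsWithin (0 : ℝ) (Ioi 0), ∀ i, c i + ε * δ i ≤ β i := by
    refine Filter.eventually_all.mpr fun i => ?_
    rcases (hc i).eq_or_lt with heq | hlt
    · filter_upwards [self_mem_nhdsWithin] with ε (hε : 0 < ε)
      nlinarith [hδ i heq]
    · have hcont : Continuous fun ε : ℝ => c i + ε * δ i := by fun_prop
      exact ((hcont.tendsto' 0 (c i) (by simp)).mono_left nhdsWithin_le_nhds).eventually_le_const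
        hlt
  obtain ⟨ε, hε, hpos⟩ := (hev.and self_mem_nhdsWithin).exists
  exact ⟨ε, hpos, hε⟩

lemma dotProduct_eq_zero_of_mem_vectorSpan {n : ℕ} {D : Set (Fin n → ℝ)} {w u : Fin n → ℝ}
    (h : ∀ v₁ ∈ D, ∀ v₂ ∈ D, (v₁ - v₂) ⬝ᵥ w = 0) (hu : u ∈ vectorSpan ℝ D) : u ⬝ᵥ w = 0 := by
  have hle : vectorSpan ℝ D ≤ LinearMap.ker ((dotProductBilin ℝ ℝ).flip w) := by
    rw [vectorSpan_def, Submodule.span_le]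
    rintro _ ⟨v₁, hv₁, v₂, hv₂, rfl⟩
    simpa using h v₁ hv₁ v₂ hv₂
  simpa using hle hu

lemma finrank_add_finrank_of_dotProduct_orthogonal {n : ℕ} {U V : Submodule ℝ (Fin n → ℝ)}
    (hV : ∀ w, w ∈ V ↔ ∀ u ∈ U, u ⬝ᵥ w = 0) :
    Module.finrank ℝ U + Module.finrank ℝ V = n := by
  let B : LinearMap.BilinForm ℝ (Fin n → ℝ) := dotProductBilin ℝ ℝ
  have hVB : V = B.orthogonal U := by
    ext w
    simp [hV, LinearMap.BilinForm.mem_orthogonal_iff, B]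
  have hker : LinearMap.ker B = ⊥ :=
    LinearMap.ker_eq_bot'.mpr fun v hv => dotProduct_eq_zero v fun w => by
      simpa [B] using LinearMap.congr_fun hv w
  have := LinearMap.BilinForm.finrank_add_finrank_orthogonal' (B := B) U
  rw [hker, inf_bot_eq, finrank_bot, add_zero, Module.finrank_fin_fun] at this
  rw [hVB, this]

lemma finrank_vectorSpan_add_finrank_vectorSpan {n : ℕ} {D E : Set (Fin n → ℝ)}
    (horth : ∀ v₁ ∈ D, ∀ v₂ ∈ D, ∀ x₁ ∈ E, ∀ x₂ ∈ E, (v₁ - v₂) ⬝ᵥ (x₁ - x₂) = 0)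
    (hmax : ∀ w, (∀ v₁ ∈ D, ∀ v₂ ∈ D, (v₁ - v₂) ⬝ᵥ w = 0) → w ∈ vectorSpan ℝ E) :
    Module.finrank ℝ (vectorSpan ℝ D) + Module.finrank ℝ (vectorSpan ℝ E) = n := by
  refine finrank_add_finrank_of_dotProduct_orthogonal fun w => ⟨fun hw u hu => ?_, fun hw => ?_⟩
  · rw [dotProduct_comm]
    refine dotProduct_eq_zero_of_mem_vectorSpan (fun x₁ hx₁ x₂ hx₂ => ?_) hw
    rw [dotProduct_comm]
    exact dotProduct_eq_zero_of_mem_vectorSpan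
      (fun v₁ hv₁ v₂ hv₂ => horth v₁ hv₁ v₂ hv₂ x₁ hx₁ x₂ hx₂) hu
  · exact hmax w fun v₁ hv₁ v₂ hv₂ => hw _ (vsub_mem_vectorSpan ℝ hv₁ hv₂)

def graphAff (n : ℕ) (u : Fin n → ℝ) (c : ℝ) : (Fin n → ℝ) →ᵃ[ℝ] (Fin n → ℝ) × ℝ where
  toFun x := (x, x ⬝ᵥ u - c)
  linear := LinearMap.prod LinearMap.id ((dotProductBilin ℝ ℝ).flip u)
  map_vadd' x v := by
    ext
    · simp [vadd_eq_add]
    · simp [vadd_eq_add, add_dotProduct]; ring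

@[simp] lemma graphAff_apply (n : ℕ) (u : Fin n → ℝ) (c : ℝ) (x : Fin n → ℝ) :
    graphAff n u c x = (x, x ⬝ᵥ u - c) := rfl

lemma dimSet_image_graphAff (n : ℕ) (u : Fin n → ℝ) (c : ℝ) (S : Set (Fin n → ℝ)) :
    dimSet n (graphAff n u c '' S) = Module.finrank ℝ (vectorSpan ℝ S) := by
  have hinj : Function.Injective (graphAff n u c).linear := fun x y h => congrArg Prod.fst h
  rw [dimSet, ← AffineSubspace.map_span, AffineSubspace.map_direction, direction_affineSpan]
  exact (Submodule.equivMapOfInjective _ hinj _).symm.finrank_eq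

def contactSet (n : ℕ) (g : (Fin n → ℝ) → EReal) (u : Fin n → ℝ) (α : ℝ) : Set (Fin n → ℝ) :=
  {v | g v = ((v ⬝ᵥ u - α : ℝ) : EReal)}

lemma not_KMinPt_of_lt {n : ℕ} {A : Set ((Fin n → ℝ) × ℝ)} {x : Fin n → ℝ} {r r' : ℝ}
    (hA : (x, r) ∈ A) (hr : r < r') : ¬ KMinPt n A (x, r') := by
  intro hmin
  have hK : ((0 : Fin n → ℝ), r' - r) ∈ Kcone n \ -Kcone n :=
    ⟨⟨rfl, by linarith⟩, fun h => by have := h.2; simp at this; linarith⟩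
  have hmem : (x, r) ∈ ({(x, r')} - (Kcone n \ -Kcone n)) ∩ A :=
    ⟨⟨(x, r'), rfl, _, hK, by simp⟩, hA⟩
  rw [hmin] at hmem
  exact hmem

lemma IsSuppHyp.snd_nonpos {n : ℕ} {g : (Fin n → ℝ) → EReal} {u : Fin n → ℝ} {s α : ℝ}
    (h : IsSuppHyp n (epi n g) u s α) : s ≤ 0 := by
  obtain ⟨-, ⟨p, -, hp⟩, hsupp⟩ := h
  exact nonpos_of_forall_ge (c := p.1 ⬝ᵥ u) (b := α) fun r hr =>
    hsupp (p.1, r) (le_trans hp (EReal.coe_le_coe_iff.mpr hr))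

lemma IsKMinExpFace.exists_eq_image_graphAff {n : ℕ} {g : (Fin n → ℝ) → EReal}
    {F : Set ((Fin n → ℝ) × ℝ)} (hF : IsKMinExpFace n (epi n g) F) :
    ∃ u α, (∀ v, ((v ⬝ᵥ u - α : ℝ) : EReal) ≤ g v) ∧
      F = graphAff n u α '' contactSet n g u α ∧ (contactSet n g u α).Nonempty := by
  obtain ⟨⟨w, s, β, hsupp, rfl⟩, hmin⟩ := hF
  obtain ⟨p, hpH, hpA⟩ := hsupp.2.1
  have hs : s ≠ 0 := by
    rintro rfl
    refine not_KMinPt_of_lt hpA (lt_add_one p.2) (hmin _ ⟨?_, ?_⟩)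
    · simpa [Hyp] using hpH
    · exact le_trans hpA (EReal.coe_le_coe_iff.mpr (by linarith))
  have hσ : 0 < -s := neg_pos.mpr (hsupp.snd_nonpos.lt_of_ne hs)
  set u := (-s)⁻¹ • w
  set α := β / -s
  have hscale : ∀ q : (Fin n → ℝ) × ℝ, q.1 ⬝ᵥ w + q.2 * s = -s * (q.1 ⬝ᵥ u - q.2) := by
    intro q
    simp only [u, dotProduct_smul, smul_eq_mul]
    field_simp
    ring
  have hle : ∀ q ∈ epi n g, q.1 ⬝ᵥ u - q.2 ≤ α := fun q hq => by
    rw [le_div_iff₀ hσ, mul_comm, ← hscale]; exact hsupp.2.2 q hq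
  have hminor : ∀ v, ((v ⬝ᵥ u - α : ℝ) : EReal) ≤ g v := fun v =>
    EReal.le_of_forall_lt_iff_le.mp fun z hz => by
      have := hle (v, z) hz.le
      exact EReal.coe_le_coe_iff.mpr (by dsimp at this; linarith)
  have hH : ∀ q : (Fin n → ℝ) × ℝ, q ∈ Hyp n w s β ↔ q.2 = q.1 ⬝ᵥ u - α := fun q => by
    have hβ : β = -s * α := by simp only [α]; field_simp
    rw [Hyp, mem_ofPred_eq, hscale, hβ, mul_right_inj' hσ.ne']
    constructor <;> intro h <;> linarith
  have hFeq : Hyp n w s β ∩ epi n g = graphAff n u α '' contactSet n g u α := by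
    ext ⟨x, r⟩
    simp only [mem_inter_iff, hH, mem_image, graphAff_apply, Prod.mk.injEq, contactSet,
      mem_ofPred_eq, epi]
    constructor
    · rintro ⟨rfl, hx⟩
      exact ⟨x, le_antisymm hx (hminor x), rfl, rfl⟩
    · rintro ⟨x, hx, rfl, rfl⟩
      exact ⟨rfl, hx.le⟩
  obtain ⟨v, hv, -⟩ := (hFeq ▸ ⟨hpH, hpA⟩ : p ∈ graphAff n u α '' contactSet n g u α)
  exact ⟨u, α, hminor, hFeq, v, hv⟩

section Conjugate

variable {n : ℕ} {f : (Fin n → ℝ) → EReal}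

lemma coe_sub_le_conj_of_le {x v : Fin n → ℝ} {r : ℝ} (h : f x ≤ r) :
    ((x ⬝ᵥ v - r : ℝ) : EReal) ≤ conj n f v :=
  le_iSup_of_le x (by rw [EReal.coe_sub]; exact EReal.sub_le_sub le_rfl h)

lemma conj_le_coe_iff_s10 {v : Fin n → ℝ} {c : ℝ} :
    conj n f v ≤ c ↔ ∀ x (r : ℝ), f x ≤ r → x ⬝ᵥ v - r ≤ c := by
  refine ⟨fun h x r hr => EReal.coe_le_coe_iff.mp ((coe_sub_le_conj_of_le hr).trans h),
    fun h => iSup_le fun x => ?_⟩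
  have hx : ((x ⬝ᵥ v - c : ℝ) : EReal) ≤ f x := EReal.le_of_forall_lt_iff_le.mp fun z hz =>
    EReal.coe_le_coe_iff.mpr (by linarith [h x z hz.le])
  calc ((x ⬝ᵥ v : ℝ) : EReal) - f x ≤ ((x ⬝ᵥ v : ℝ) : EReal) - ((x ⬝ᵥ v - c : ℝ) : EReal) :=
        EReal.sub_le_sub le_rfl hx
    _ = c := by rw [← EReal.coe_sub, sub_sub_cancel]

lemma coe_sub_le_of_conj_le {v : Fin n → ℝ} {c : ℝ} (h : conj n f v ≤ c) (x : Fin n → ℝ) :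
    ((x ⬝ᵥ v - c : ℝ) : EReal) ≤ f x :=
  EReal.le_of_forall_lt_iff_le.mp fun z hz =>
    EReal.coe_le_coe_iff.mpr (by linarith [conj_le_coe_iff_s10.mp h x z hz.le])

lemma mem_subdiff_iff_of_conj_eq (hdom : ∃ x, f x ≠ ⊤) {x v : Fin n → ℝ} {c : ℝ}
    (hc : conj n f v = c) : v ∈ subdiff n f x ↔ f x = ((x ⬝ᵥ v - c : ℝ) : EReal) := by
  refine ⟨fun h => le_antisymm ?_ (coe_sub_le_of_conj_le hc.le x), fun h y => ?_⟩
  · have htop : f x ≠ ⊤ := by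
      obtain ⟨x₀, hx₀⟩ := hdom
      intro htop
      have := h x₀
      rw [htop, EReal.top_add_coe, top_le_iff] at this
      exact hx₀ this
    have hbot : f x ≠ ⊥ := ne_bot_of_le_ne_bot (EReal.coe_ne_bot _) (coe_sub_le_of_conj_le hc.le x)
    have hfx := (EReal.coe_toReal htop hbot).symm
    rw [hfx]
    have hcx : c ≤ x ⬝ᵥ v - (f x).toReal := by
      rw [← EReal.coe_le_coe_iff, ← hc]
      refine conj_le_coe_iff_s10.mpr fun y r hr => ?_
      have := (h y).trans hr
      rw [hfx, ← EReal.coe_add, EReal.coe_le_coe_iff, dotProduct_sub, dotProduct_comm v y,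
        dotProduct_comm v x] at this
      linarith
    exact EReal.coe_le_coe_iff.mpr (by linarith)
  · rw [h, ← EReal.coe_add]
    refine le_trans (le_of_eq ?_) (coe_sub_le_of_conj_le hc.le y)
    rw [dotProduct_sub, dotProduct_comm v y, dotProduct_comm v x]
    ring_nf

lemma mem_contactSet_conj_of_le {u v : Fin n → ℝ} {α : ℝ} (hu : f u ≤ α)
    (hv : conj n f v ≤ ((v ⬝ᵥ u - α : ℝ) : EReal)) : v ∈ contactSet n (conj n f) u α :=
  le_antisymm hv (by simpa only [dotProduct_comm] using coe_sub_le_conj_of_le (v := v) hu)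

end Conjugate

section Duality

variable {n : ℕ} {f : (Fin n → ℝ) → EReal}

lemma Psi_image_graphAff (hdom : ∃ x, f x ≠ ⊤) {u v₀ : Fin n → ℝ} {α : ℝ}
    (hv₀ : v₀ ∈ contactSet n (conj n f) u α) :
    Psi n f (graphAff n u α '' contactSet n (conj n f) u α) =
      graphAff n v₀ (v₀ ⬝ᵥ u - α) '' {x | contactSet n (conj n f) u α ⊆ subdiff n f x} := by
  set D := contactSet n (conj n f) u α
  have hsep : {q ∈ graphAff n u α '' D | (q.2 : EReal) = conj n f q.1} = graphAff n u α '' D :=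
    sep_eq_self_iff_mem_true.mpr (by rintro _ ⟨v, hv, rfl⟩; exact hv.symm)
  have hf : ∀ {x}, D ⊆ subdiff n f x → f x = ((x ⬝ᵥ v₀ - (v₀ ⬝ᵥ u - α) : ℝ) : EReal) :=
    fun hx => (mem_subdiff_iff_of_conj_eq hdom hv₀).mp (hx hv₀)
  rw [Psi, hsep]
  ext ⟨x, r⟩
  rw [mem_iInter₂, forall_mem_image]
  simp only [graphAff_apply, mem_ofPred_eq, mem_image, Prod.mk.injEq]
  constructor
  · intro h
    have hx : D ⊆ subdiff n f x := fun v hv => (h hv).2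
    exact ⟨x, hx, rfl, EReal.coe_injective ((hf hx).symm.trans (h hv₀).1.symm)⟩
  · rintro ⟨x, hx, rfl, rfl⟩ v hv
    exact ⟨(hf hx).symm, hx hv⟩

lemma dotProduct_sub_sub_eq_zero (hdom : ∃ x, f x ≠ ⊤) {x₁ x₂ v₁ v₂ : Fin n → ℝ} {c₁ c₂ : ℝ}
    (hc₁ : conj n f v₁ = c₁) (hc₂ : conj n f v₂ = c₂)
    (h₁ : {v₁, v₂} ⊆ subdiff n f x₁) (h₂ : {v₁, v₂} ⊆ subdiff n f x₂) :
    (v₁ - v₂) ⬝ᵥ (x₁ - x₂) = 0 := by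
  have hval : ∀ {x v : Fin n → ℝ} {c : ℝ}, conj n f v = c → v ∈ subdiff n f x →
      f x = ((x ⬝ᵥ v - c : ℝ) : EReal) :=
    fun hc hv => (mem_subdiff_iff_of_conj_eq hdom hc).mp hv
  have e₁ := EReal.coe_injective <|
    (hval hc₁ (h₁ (mem_insert _ _))).symm.trans (hval hc₂ (h₁ (mem_insert_of_mem _ rfl)))
  have e₂ := EReal.coe_injective <|
    (hval hc₁ (h₂ (mem_insert _ _))).symm.trans (hval hc₂ (h₂ (mem_insert_of_mem _ rfl)))
  rw [sub_dotProduct, dotProduct_sub, dotProduct_sub, dotProduct_comm v₁ x₁, dotProduct_comm v₁ x₂,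
    dotProduct_comm v₂ x₁, dotProduct_comm v₂ x₂]
  linarith

end Duality

def IsEpiRep {N : ℕ} (n : ℕ) (f : (Fin n → ℝ) → EReal) (a : Fin N → Fin n → ℝ) (t b : Fin N → ℝ) :
    Prop :=
  ∀ x (r : ℝ), f x ≤ r ↔ ∀ i, x ⬝ᵥ a i + r * t i ≤ b i

section Polyhedral

variable {n N : ℕ} {f : (Fin n → ℝ) → EReal} {a : Fin N → Fin n → ℝ} {t b : Fin N → ℝ}

lemma IsEpiRep.coeff_nonpos (hrep : IsEpiRep n f a t b)
    (hdom : ∃ x, f x ≠ ⊤) (i : Fin N) : t i ≤ 0 := by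
  obtain ⟨x, hx⟩ := hdom
  obtain ⟨r₀, hr₀, -⟩ := EReal.lt_iff_exists_real_btwn.mp (lt_top_iff_ne_top.mpr hx)
  exact nonpos_of_forall_ge (c := x ⬝ᵥ a i) (b := b i) fun r hr =>
    (hrep x r).mp (hr₀.le.trans (EReal.coe_le_coe_iff.mpr hr)) i

lemma IsEpiRep.conj_inv_smul_le (hrep : IsEpiRep n f a t b)
    {i : Fin N} (hti : t i < 0) : conj n f ((-t i)⁻¹ • a i) ≤ ((b i / -t i : ℝ) : EReal) :=
  conj_le_coe_iff_s10.mpr fun x r hr => by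
    have hscale : ((-t i)⁻¹ * (x ⬝ᵥ a i) - r) * -t i = x ⬝ᵥ a i + r * t i := by
      field_simp [hti.ne]
      ring
    rw [dotProduct_smul, smul_eq_mul, le_div_iff₀ (neg_pos.mpr hti), hscale]
    exact (hrep x r).mp hr i

lemma IsEpiRep.conj_add_le (hrep : IsEpiRep n f a t b)
    {i : Fin N} (hti : t i = 0) {v : Fin n → ℝ} {c : ℝ} (hv : conj n f v ≤ c) :
    conj n f (v + a i) ≤ ((c + b i : ℝ) : EReal) :=
  conj_le_coe_iff_s10.mpr fun x r hr => by
    have h₁ := conj_le_coe_iff_s10.mp hv x r hr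
    have h₂ := (hrep x r).mp hr i
    rw [hti, mul_zero, add_zero] at h₂
    rw [dotProduct_add]
    linarith

/-- `hminor` says `f** u ≤ α`: this is `f ≤ f**` at `u`, valid as polyhedral `f` is closed. -/
lemma IsEpiRep.le_of_forall_coe_sub_le_conj (hrep : IsEpiRep n f a t b)
    (ht : ∀ i, t i ≤ 0) {u v₀ : Fin n → ℝ} {α : ℝ}
    (hminor : ∀ v, ((v ⬝ᵥ u - α : ℝ) : EReal) ≤ conj n f v)
    (hv₀ : v₀ ∈ contactSet n (conj n f) u α) : f u ≤ α := by
  refine (hrep u α).mpr fun i => ?_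
  rcases (ht i).lt_or_eq with hti | hti
  · have h := EReal.coe_le_coe_iff.mp ((hminor _).trans (hrep.conj_inv_smul_le hti))
    have hscale : ((-t i)⁻¹ * (a i ⬝ᵥ u) - α) * -t i = u ⬝ᵥ a i + α * t i := by
      rw [dotProduct_comm]
      field_simp [hti.ne]
      ring
    rwa [smul_dotProduct, smul_eq_mul, le_div_iff₀ (neg_pos.mpr hti), hscale] at h
  · have h := EReal.coe_le_coe_iff.mp ((hminor _).trans (hrep.conj_add_le hti hv₀.le))
    rw [add_dotProduct, dotProduct_comm (a i)] at h
    rw [hti, mul_zero, add_zero]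
    linarith

lemma IsEpiRep.dotProduct_add_mul_eq_zero_of_active
    (hrep : IsEpiRep n f a t b) (ht : ∀ i, t i ≤ 0)
    {u v₀ w : Fin n → ℝ} {α m : ℝ} (hu : f u ≤ α) (hv₀ : v₀ ∈ contactSet n (conj n f) u α)
    (hw : ∀ v ∈ contactSet n (conj n f) u α, v ⬝ᵥ w = m) {i : Fin N}
    (hact : u ⬝ᵥ a i + α * t i = b i) : w ⬝ᵥ a i + m * t i = 0 := by
  rcases (ht i).lt_or_eq with hti | hti
  · have hmem : (-t i)⁻¹ • a i ∈ contactSet n (conj n f) u α := by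
      refine mem_contactSet_conj_of_le hu ((hrep.conj_inv_smul_le hti).trans_eq ?_)
      rw [smul_dotProduct, smul_eq_mul, dotProduct_comm, ← hact]
      congr 1
      field_simp [hti.ne]
      ring
    have h := hw _ hmem
    rw [smul_dotProduct, smul_eq_mul, dotProduct_comm, inv_mul_eq_iff_eq_mul₀ (by linarith)] at h
    linarith
  · have hmem : v₀ + a i ∈ contactSet n (conj n f) u α := by
      refine mem_contactSet_conj_of_le hu ((hrep.conj_add_le hti hv₀.le).trans_eq ?_)
      rw [hti, mul_zero, add_zero] at hact
      rw [add_dotProduct, dotProduct_comm (a i), hact]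
      ring_nf
    have h := hw _ hmem
    rw [add_dotProduct, hw v₀ hv₀, dotProduct_comm] at h
    rw [hti, mul_zero]
    linarith

lemma IsEpiRep.mem_vectorSpan_of_forall_dotProduct_sub_eq_zero
    (hrep : IsEpiRep n f a t b) (ht : ∀ i, t i ≤ 0)
    (hdom : ∃ x, f x ≠ ⊤) {u v₀ w : Fin n → ℝ} {α : ℝ} (hu : f u = α)
    (hv₀ : v₀ ∈ contactSet n (conj n f) u α)
    (hw : ∀ v₁ ∈ contactSet n (conj n f) u α, ∀ v₂ ∈ contactSet n (conj n f) u α,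
      (v₁ - v₂) ⬝ᵥ w = 0) :
    w ∈ vectorSpan ℝ {x | contactSet n (conj n f) u α ⊆ subdiff n f x} := by
  set D := contactSet n (conj n f) u α
  have hm : ∀ v ∈ D, v ⬝ᵥ w = v₀ ⬝ᵥ w := fun v hv => by
    have := hw v hv v₀ hv₀
    rwa [sub_dotProduct, sub_eq_zero] at this
  obtain ⟨ε, hε, hεle⟩ := exists_pos_forall_add_mul_le ((hrep u α).mp hu.le)
    fun i hact => (hrep.dotProduct_add_mul_eq_zero_of_active ht hu.le hv₀ hm hact).le
  have hfε : f (u + ε • w) ≤ ((α + ε * (v₀ ⬝ᵥ w) : ℝ) : EReal) := (hrep _ _).mpr fun i => by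
    have := hεle i
    rw [add_dotProduct, smul_dotProduct, smul_eq_mul]
    linarith
  have hmemE : ∀ {x}, (∀ v ∈ D, f x ≤ ((x ⬝ᵥ v - (v ⬝ᵥ u - α) : ℝ) : EReal)) →
      x ∈ {x | D ⊆ subdiff n f x} := fun hx v hv =>
    (mem_subdiff_iff_of_conj_eq hdom hv).mpr
      (le_antisymm (hx v hv) (coe_sub_le_of_conj_le hv.le _))
  have huE : u ∈ {x | D ⊆ subdiff n f x} :=
    hmemE fun v _ => hu.le.trans_eq (congrArg _ (by rw [dotProduct_comm]; ring))
  have hεE : u + ε • w ∈ {x | D ⊆ subdiff n f x} :=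
    hmemE fun v hv => hfε.trans_eq <| congrArg _ <| by
    rw [add_dotProduct, smul_dotProduct, smul_eq_mul, dotProduct_comm w, hm v hv, dotProduct_comm u]
    ring
  have hεw := vsub_mem_vectorSpan ℝ hεE huE
  rwa [vsub_eq_sub, add_sub_cancel_left, Submodule.smul_mem_iff _ hε.ne'] at hεw

end Polyhedral

theorem stmt10_general (n : ℕ) (f : (Fin n → ℝ) → EReal)
    (hdom : ∃ x, f x ≠ ⊤)
    (hpoly : IsPolyhedral n (epi n f))
    (Fs : Set ((Fin n → ℝ) × ℝ))
    (hFs : IsKMinExpFace n (epi n (conj n f)) Fs) :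
    dimSet n Fs + dimSet n (Psi n f Fs) = n := by
  obtain ⟨N, a, t, b, hepi⟩ := hpoly
  have hrep : IsEpiRep n f a t b := fun x r => Set.ext_iff.mp hepi (x, r)
  have ht := hrep.coeff_nonpos hdom
  obtain ⟨u, α, hminor, rfl, v₀, hv₀⟩ := hFs.exists_eq_image_graphAff
  have hfu : f u = α := le_antisymm (hrep.le_of_forall_coe_sub_le_conj ht hminor hv₀)
    (by simpa [dotProduct_comm] using coe_sub_le_of_conj_le hv₀.le u)
  rw [Psi_image_graphAff hdom hv₀, dimSet_image_graphAff, dimSet_image_graphAff]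
  refine finrank_vectorSpan_add_finrank_vectorSpan (fun v₁ hv₁ v₂ hv₂ x₁ hx₁ x₂ hx₂ => ?_)
    fun w hw => hrep.mem_vectorSpan_of_forall_dotProduct_sub_eq_zero ht hdom hfu hv₀ hw
  exact dotProduct_sub_sub_eq_zero hdom hv₁ hv₂ (pair_subset (hx₁ hv₁) (hx₁ hv₂))
    (pair_subset (hx₂ hv₁) (hx₂ hv₂))

/-- for a proper closed polyhedral convex f and every K-minimal
exposed face F* of epi f*, dim F* + dim Ψ(F*) = n. -/
theorem stmt10 (n : ℕ) (f : (Fin n → ℝ) → EReal)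
    (hdom : ∃ x, f x ≠ ⊤) (hbot : ∀ x, f x ≠ ⊥)
    (hpoly : IsPolyhedral n (epi n f))
    (Fs : Set ((Fin n → ℝ) × ℝ))
    (hFs : IsKMinExpFace n (epi n (conj n f)) Fs) :
    dimSet n Fs + dimSet n (Psi n f Fs) = n :=
  stmt10_general n f hdom hpoly Fs hFs
end
end
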